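/- Let φ_1 ∈ NN(W_1, D_1, K_1) have output dimension equal to the input dimension of φ_2 ∈ NN(W_2, D_2, K_2). Then the composition φ_2 ∘ φ_1 belongs to NN(max{W_1, W_2}, D_1 + D_2, (√2)^{D_1} K_2 √(K_1² + 2)). -/

import Mathlib

/-!
ReLU is positively homogeneous, so the hidden layers of the first network can be rescaled one
after another without changing its function: dividing layer `ℓ` by
`s_ℓ = √(‖A_ℓ‖_F² + ‖b_ℓ‖² + 1)` (and its bias by the accumulated factor `∏_{j ≤ ℓ} s_j`) makes
every hidden factor of `κ` at most `√2`, while the output matrix absorbs `∏ s_j` and so has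
Frobenius norm exactly `κ(θ₁) ≤ K₁`. The composed network then runs the hidden layers of the first
network, a merged layer `(A'_0 A_{D₁}, b'_0)`, and the remaining layers of the second one. By
submultiplicativity of the Frobenius norm, `‖A'_0 A_{D₁}‖_F² + ‖b'_0‖² + 1` is at most
`(‖A_{D₁}‖_F² + 1)(‖A'_0‖_F² + ‖b'_0‖² + 1)`, so merging costs a factor `√(K₁² + 1)` over `κ(θ₂)`.
-/

open scoped BigOperators

noncomputable section

/-- ReLU activation. -/
def relu (t : ℝ) : ℝ := max 0 t

/-- Squared Frobenius norm of a matrix. -/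
def frobSq {m n : ℕ} (A : Matrix (Fin m) (Fin n) ℝ) : ℝ := ∑ i, ∑ j, (A i j) ^ 2

/-- Frobenius norm of a matrix. -/
def frob {m n : ℕ} (A : Matrix (Fin m) (Fin n) ℝ) : ℝ := Real.sqrt (frobSq A)

/-- Squared Euclidean norm of a vector. -/
def sqNorm {n : ℕ} (v : Fin n → ℝ) : ℝ := ∑ i, (v i) ^ 2

/-- A ReLU network of depth `D`, input dimension `d` and output dimension `k`:
layer widths `N 0 = d, N 1, …, N D, N (D+1) = k`, weight matrices `A ℓ` and biases `b ℓ`. -/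
structure ReluNetwork (D d k : ℕ) where
  N : ℕ → ℕ
  hN0 : N 0 = d
  hNlast : N (D + 1) = k
  A : (ℓ : ℕ) → Matrix (Fin (N (ℓ + 1))) (Fin (N ℓ)) ℝ
  b : (ℓ : ℕ) → Fin (N (ℓ + 1)) → ℝ

namespace ReluNetwork

variable {D d k : ℕ}

/-- Output of the `ℓ`-th hidden layer (after the ReLU). -/
def layer (net : ReluNetwork D d k) : (ℓ : ℕ) → (Fin d → ℝ) → Fin (net.N ℓ) → ℝ
  | 0 => fun x i => x (Fin.cast net.hN0 i)
  | (ℓ + 1) => fun x i =>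
      relu ((∑ j, net.A ℓ i j * net.layer ℓ x j) + net.b ℓ i)

/-- The function realized by the network:
`f_θ(x) = A_D σ(A_{D-1} σ( ⋯ σ(A_0 x + b_0) ⋯ ) + b_{D-1})`. -/
def realize (net : ReluNetwork D d k) (x : Fin d → ℝ) : Fin k → ℝ :=
  fun i => ∑ j, net.A D (Fin.cast net.hNlast.symm i) j * net.layer D x j

/-- Multiplicative Frobenius norm constraint
`κ(θ) = ‖A_D‖_F ∏_{ℓ<D} √(‖A_ℓ‖_F² + ‖b_ℓ‖² + 1)`. -/
def kappa (net : ReluNetwork D d k) : ℝ :=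
  frob (net.A D) *
    ∏ ℓ ∈ Finset.range D, Real.sqrt (frobSq (net.A ℓ) + sqNorm (net.b ℓ) + 1)

/-- All (hidden) layer widths are at most `W`. -/
def widthLe (net : ReluNetwork D d k) (W : ℕ) : Prop :=
  ∀ ℓ, 0 < ℓ → ℓ ≤ D → net.N ℓ ≤ W

end ReluNetwork

/-- The norm-constrained class `NN(W, D, K)` of functions `ℝ^d → ℝ^k` realized by depth-`D`
ReLU networks with all layer widths at most `W` and `κ(θ) ≤ K`. -/
def NNclass (d k W D : ℕ) (K : ℝ) : Set ((Fin d → ℝ) → Fin k → ℝ) :=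
  {f | ∃ net : ReluNetwork D d k, net.widthLe W ∧ net.kappa ≤ K ∧ net.realize = f}

open Finset Matrix

lemma relu_mul {c : ℝ} (hc : 0 ≤ c) (t : ℝ) : relu (c * t) = c * relu t := by
  simp [relu, mul_max_of_nonneg _ _ hc]

lemma Fin.cast_bijective {m n : ℕ} (h : m = n) : (Fin.cast h).Bijective :=
  (finCongr h).bijective

section Norms

variable {m n m' n' : ℕ}

lemma frobSq_nonneg (A : Matrix (Fin m) (Fin n) ℝ) : 0 ≤ frobSq A := by
  unfold frobSq; positivity

lemma sqNorm_nonneg (v : Fin n → ℝ) : 0 ≤ sqNorm v := by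
  unfold sqNorm; positivity

lemma frob_sq (A : Matrix (Fin m) (Fin n) ℝ) : frob A ^ 2 = frobSq A :=
  Real.sq_sqrt (frobSq_nonneg A)

lemma frobSq_submatrix (A : Matrix (Fin m) (Fin n) ℝ) {e₁ : Fin m' → Fin m}
    {e₂ : Fin n' → Fin n} (he₁ : e₁.Bijective) (he₂ : e₂.Bijective) :
    frobSq (A.submatrix e₁ e₂) = frobSq A := by
  simp only [frobSq, submatrix_apply]
  rw [he₁.sum_comp (fun i => ∑ j, A i (e₂ j) ^ 2)]
  exact sum_congr rfl fun i _ => he₂.sum_comp (fun j => A i j ^ 2)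

lemma sqNorm_comp (v : Fin n → ℝ) {e : Fin n' → Fin n} (he : e.Bijective) :
    sqNorm (v ∘ e) = sqNorm v :=
  he.sum_comp (fun i => v i ^ 2)

lemma frobSq_smul (c : ℝ) (A : Matrix (Fin m) (Fin n) ℝ) : frobSq (c • A) = c ^ 2 * frobSq A := by
  simp [frobSq, mul_sum, mul_pow]

lemma sqNorm_smul (c : ℝ) (v : Fin n → ℝ) : sqNorm (c • v) = c ^ 2 * sqNorm v := by
  simp [sqNorm, mul_sum, mul_pow]

open scoped Matrix.Norms.Frobenius in
lemma frob_eq_norm (A : Matrix (Fin m) (Fin n) ℝ) : frob A = ‖A‖ := by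
  simp [frob, frobSq, frobenius_norm_def, Real.sqrt_eq_rpow]

open scoped Matrix.Norms.Frobenius in
lemma frob_mul_le {p : ℕ} (A : Matrix (Fin m) (Fin n) ℝ) (B : Matrix (Fin n) (Fin p) ℝ) :
    frob (A * B) ≤ frob A * frob B := by
  simpa only [frob_eq_norm] using frobenius_norm_mul A B

lemma frobSq_mul_le {p : ℕ} (A : Matrix (Fin m) (Fin n) ℝ) (B : Matrix (Fin n) (Fin p) ℝ) :
    frobSq (A * B) ≤ frobSq A * frobSq B := by
  rw [← frob_sq, ← frob_sq, ← frob_sq, ← mul_pow]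
  exact pow_le_pow_left₀ (Real.sqrt_nonneg _) (frob_mul_le A B) 2

end Norms

lemma sqrt_mul_add_le {x a t : ℝ} (hx : 0 ≤ x) (ha : 0 ≤ a) (ht : 0 ≤ t) :
    √(x * a + t + 1) ≤ √(a + 1) * √(x + t + 1) := by
  rw [← Real.sqrt_mul (by positivity)]
  exact Real.sqrt_le_sqrt (by nlinarith)

def reluLayer {m n : ℕ} (A : Matrix (Fin m) (Fin n) ℝ) (b : Fin m → ℝ) (x : Fin n → ℝ) :
    Fin m → ℝ :=
  fun i => relu ((A *ᵥ x) i + b i)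

lemma reluLayer_smul {m n : ℕ} {c : ℝ} (hc : 0 ≤ c) (A : Matrix (Fin m) (Fin n) ℝ)
    (b : Fin m → ℝ) (x : Fin n → ℝ) : reluLayer A (c • b) (c • x) = c • reluLayer A b x := by
  funext i
  simp [reluLayer, mulVec_smul, ← mul_add, relu_mul hc]

lemma reluLayer_smul_left {m n : ℕ} (c : ℝ) (A : Matrix (Fin m) (Fin n) ℝ) (b : Fin m → ℝ)
    (x : Fin n → ℝ) : reluLayer (c • A) b x = reluLayer A b (c • x) := by
  unfold reluLayer
  rw [smul_mulVec, mulVec_smul]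

namespace ReluNetwork

variable {D d k m : ℕ}

lemma layer_zero (net : ReluNetwork D d k) (x : Fin d → ℝ) :
    net.layer 0 x = x ∘ Fin.cast net.hN0 := rfl

lemma layer_succ (net : ReluNetwork D d k) (ℓ : ℕ) (x : Fin d → ℝ) :
    net.layer (ℓ + 1) x = reluLayer (net.A ℓ) (net.b ℓ) (net.layer ℓ x) := rfl

lemma realize_apply (net : ReluNetwork D d k) (x : Fin d → ℝ) :
    net.realize x = (net.A D *ᵥ net.layer D x) ∘ Fin.cast net.hNlast.symm := rfl

def layerFactor (net : ReluNetwork D d k) (ℓ : ℕ) : ℝ :=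
  √(frobSq (net.A ℓ) + sqNorm (net.b ℓ) + 1)

lemma kappa_eq (net : ReluNetwork D d k) :
    net.kappa = frob (net.A D) * ∏ ℓ ∈ range D, net.layerFactor ℓ := rfl

lemma layerFactor_nonneg (net : ReluNetwork D d k) (ℓ : ℕ) : 0 ≤ net.layerFactor ℓ :=
  Real.sqrt_nonneg _

lemma one_le_layerFactor (net : ReluNetwork D d k) (ℓ : ℕ) : 1 ≤ net.layerFactor ℓ := by
  rw [layerFactor, Real.one_le_sqrt]
  linarith [frobSq_nonneg (net.A ℓ), sqNorm_nonneg (net.b ℓ)]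

lemma kappa_nonneg (net : ReluNetwork D d k) : 0 ≤ net.kappa :=
  mul_nonneg (Real.sqrt_nonneg _) (prod_nonneg fun ℓ _ => net.layerFactor_nonneg ℓ)

lemma widthLe.mono {net : ReluNetwork D d k} {W W' : ℕ} (h : net.widthLe W) (hW : W ≤ W') :
    net.widthLe W' :=
  fun ℓ h0 hD => (h ℓ h0 hD).trans hW

def cons {n : ℕ} (A : Matrix (Fin n) (Fin d) ℝ) (b : Fin n → ℝ) (net : ReluNetwork D n k) :
    ReluNetwork (D + 1) d k where
  N ℓ := match ℓ with
    | 0 => d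
    | ℓ + 1 => net.N ℓ
  hN0 := rfl
  hNlast := net.hNlast
  A ℓ := match ℓ with
    | 0 => A.submatrix (Fin.cast net.hN0) id
    | ℓ + 1 => net.A ℓ
  b ℓ := match ℓ with
    | 0 => b ∘ Fin.cast net.hN0
    | ℓ + 1 => net.b ℓ

def tail (net : ReluNetwork (D + 1) d k) : ReluNetwork D (net.N 1) k where
  N ℓ := net.N (ℓ + 1)
  hN0 := rfl
  hNlast := net.hNlast
  A ℓ := net.A (ℓ + 1)
  b ℓ := net.b (ℓ + 1)

def precomp (net : ReluNetwork D k m) (B : Matrix (Fin k) (Fin d) ℝ) : ReluNetwork D d m where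
  N ℓ := match ℓ with
    | 0 => d
    | ℓ + 1 => net.N (ℓ + 1)
  hN0 := rfl
  hNlast := net.hNlast
  A ℓ := match ℓ with
    | 0 => (net.A 0).submatrix id (Fin.cast net.hN0.symm) * B
    | ℓ + 1 => net.A (ℓ + 1)
  b := net.b

section cons

variable {n : ℕ} (A : Matrix (Fin n) (Fin d) ℝ) (b : Fin n → ℝ) (net : ReluNetwork D n k)

lemma layer_cons_succ (x : Fin d → ℝ) (ℓ : ℕ) :
    (cons A b net).layer (ℓ + 1) x = net.layer ℓ (reluLayer A b x) := by
  induction ℓ with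
  | zero => rfl
  | succ ℓ ih => rw [layer_succ, ih]; rfl

lemma realize_cons : (cons A b net).realize = net.realize ∘ reluLayer A b := by
  funext x
  rw [realize_apply, layer_cons_succ]
  rfl

lemma kappa_cons : (cons A b net).kappa = √(frobSq A + sqNorm b + 1) * net.kappa := by
  have hA : frobSq ((cons A b net).A 0) = frobSq A :=
    frobSq_submatrix A (Fin.cast_bijective net.hN0) Function.bijective_id
  have hb : sqNorm ((cons A b net).b 0) = sqNorm b := sqNorm_comp b (Fin.cast_bijective net.hN0)
  rw [kappa_eq, prod_range_succ', layerFactor, hA, hb, kappa_eq]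
  change frob (net.A D) * ((∏ ℓ ∈ range D, net.layerFactor ℓ) * _) = _
  ring

lemma widthLe_cons {W : ℕ} (hn : n ≤ W) (h : net.widthLe W) : (cons A b net).widthLe W := by
  rintro (_ | _ | ℓ) h0 hD
  · exact absurd h0 (lt_irrefl 0)
  · exact net.hN0.trans_le hn
  · exact h (ℓ + 1) ℓ.succ_pos (by omega)

end cons

section tail

variable (net : ReluNetwork (D + 1) d k)

lemma layer_tail (x : Fin d → ℝ) (ℓ : ℕ) :
    net.tail.layer ℓ (net.layer 1 x) = net.layer (ℓ + 1) x := by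
  induction ℓ with
  | zero => rfl
  | succ ℓ ih => rw [layer_succ, ih]; rfl

lemma realize_tail (x : Fin d → ℝ) : net.tail.realize (net.layer 1 x) = net.realize x := by
  rw [realize_apply, layer_tail]
  rfl

lemma layer_one (x : Fin d → ℝ) :
    net.layer 1 x = reluLayer ((net.A 0).submatrix id (Fin.cast net.hN0.symm)) (net.b 0) x := by
  have hmul : (net.A 0).submatrix id (Fin.cast net.hN0.symm) *ᵥ x
      = net.A 0 *ᵥ (x ∘ Fin.cast net.hN0) :=
    submatrix_mulVec_equiv (net.A 0) x id (finCongr net.hN0.symm)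
  rw [layer_succ, layer_zero]
  unfold reluLayer
  rw [hmul]

lemma widthLe_tail {W : ℕ} (h : net.widthLe W) : net.tail.widthLe W :=
  fun ℓ _ hD => h (ℓ + 1) ℓ.succ_pos (by omega)

end tail

section precomp

variable (net : ReluNetwork D k m) (B : Matrix (Fin k) (Fin d) ℝ)

lemma precomp_A_zero_mulVec (x : Fin d → ℝ) :
    (net.precomp B).A 0 *ᵥ x = net.A 0 *ᵥ ((B *ᵥ x) ∘ Fin.cast net.hN0) := by
  change ((net.A 0).submatrix id (Fin.cast net.hN0.symm) * B) *ᵥ x = _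
  rw [← mulVec_mulVec]
  exact submatrix_mulVec_equiv (net.A 0) (B *ᵥ x) id (finCongr net.hN0.symm)

lemma layer_precomp_succ (x : Fin d → ℝ) (ℓ : ℕ) :
    (net.precomp B).layer (ℓ + 1) x = net.layer (ℓ + 1) (B *ᵥ x) := by
  induction ℓ with
  | zero =>
      change reluLayer ((net.precomp B).A 0) (net.b 0) x = _
      rw [layer_succ, layer_zero]
      unfold reluLayer
      rw [precomp_A_zero_mulVec]
      rfl
  | succ ℓ ih => rw [layer_succ, ih]; rfl

lemma realize_precomp : (net.precomp B).realize = fun x => net.realize (B *ᵥ x) := by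
  funext x
  cases D with
  | zero =>
      rw [realize_apply, realize_apply, layer_zero net]
      change ((net.precomp B).A 0 *ᵥ x) ∘ _ = _
      rw [precomp_A_zero_mulVec]
      rfl
  | succ E => rw [realize_apply, realize_apply, layer_precomp_succ]; rfl

lemma frobSq_precomp_A_zero_le :
    frobSq ((net.precomp B).A 0) ≤ frobSq (net.A 0) * frobSq B := by
  calc frobSq ((net.precomp B).A 0)
      ≤ frobSq ((net.A 0).submatrix id (Fin.cast net.hN0.symm)) * frobSq B := frobSq_mul_le _ _
    _ = frobSq (net.A 0) * frobSq B := by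
      rw [frobSq_submatrix (net.A 0) Function.bijective_id (Fin.cast_bijective net.hN0.symm)]

lemma kappa_precomp_le : (net.precomp B).kappa ≤ √(frobSq B + 1) * net.kappa := by
  have hA := net.frobSq_precomp_A_zero_le B
  have hB := frobSq_nonneg B
  have hA₀ := frobSq_nonneg (net.A 0)
  cases D with
  | zero =>
      simp only [kappa_eq, range_zero, prod_empty, mul_one, frob]
      calc √(frobSq ((net.precomp B).A 0))
          ≤ √(frobSq (net.A 0) * (frobSq B + 1)) := Real.sqrt_le_sqrt (by nlinarith)
        _ = √(frobSq B + 1) * √(frobSq (net.A 0)) := by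
          rw [Real.sqrt_mul hA₀, mul_comm]
  | succ E =>
      have h₀ : (net.precomp B).layerFactor 0 ≤ √(frobSq B + 1) * net.layerFactor 0 :=
        (Real.sqrt_le_sqrt (by change _ + sqNorm (net.b 0) + 1 ≤ _; linarith)).trans
          (sqrt_mul_add_le hA₀ hB (sqNorm_nonneg (net.b 0)))
      rw [kappa_eq, kappa_eq, prod_range_succ', prod_range_succ']
      change frob (net.A (E + 1)) * ((∏ ℓ ∈ range E, net.layerFactor (ℓ + 1)) * _) ≤ _
      have hP : 0 ≤ ∏ ℓ ∈ range E, net.layerFactor (ℓ + 1) :=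
        prod_nonneg fun ℓ _ => net.layerFactor_nonneg _
      calc frob (net.A (E + 1)) * ((∏ ℓ ∈ range E, net.layerFactor (ℓ + 1)) * _)
          ≤ frob (net.A (E + 1)) * ((∏ ℓ ∈ range E, net.layerFactor (ℓ + 1))
              * (√(frobSq B + 1) * net.layerFactor 0)) := by
            gcongr
            exact Real.sqrt_nonneg _
        _ = _ := by ring

lemma widthLe_precomp {W : ℕ} (h : net.widthLe W) : (net.precomp B).widthLe W := by
  rintro (_ | ℓ) h0 hD
  · exact absurd h0 (lt_irrefl 0)
  · exact h (ℓ + 1) h0 hD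

end precomp

lemma realize_of_depth_zero (f : ReluNetwork 0 d k) (x : Fin d → ℝ) :
    f.realize x = (f.A 0).submatrix (Fin.cast f.hNlast.symm) (Fin.cast f.hN0.symm) *ᵥ x :=
  (submatrix_mulVec_equiv (f.A 0) x _ (finCongr f.hN0.symm)).symm

section comp

variable {D₂ : ℕ} (g : ReluNetwork D₂ k m)

-- The depth is written `D₂ + D₁` because `D₂ + (D + 1)` reduces to `(D₂ + D) + 1`, which makes
-- the recursion on `D₁` typecheck without casts.
def comp : {D₁ d : ℕ} → ReluNetwork D₁ d k → ReluNetwork (D₂ + D₁) d m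
  | 0, _, f => g.precomp ((f.A 0).submatrix (Fin.cast f.hNlast.symm) (Fin.cast f.hN0.symm))
  | _ + 1, _, f => cons ((f.A 0).submatrix id (Fin.cast f.hN0.symm)) (f.b 0) (comp f.tail)

theorem realize_comp : ∀ {D₁ d : ℕ} (f : ReluNetwork D₁ d k),
    (g.comp f).realize = g.realize ∘ f.realize
  | 0, _, f => by
      funext x
      rw [comp, realize_precomp, Function.comp_apply, realize_of_depth_zero]
  | _ + 1, _, f => by
      funext x
      rw [comp, realize_cons, Function.comp_apply, realize_comp f.tail, ← layer_one,
        Function.comp_apply, realize_tail]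
      rfl

theorem kappa_comp_le : ∀ {D₁ d : ℕ} (f : ReluNetwork D₁ d k),
    (g.comp f).kappa ≤ g.kappa * (√(frobSq (f.A D₁) + 1) * ∏ ℓ ∈ range D₁, f.layerFactor ℓ)
  | 0, _, f => by
      rw [comp, prod_range_zero, mul_one, mul_comm,
        ← frobSq_submatrix (f.A 0) (Fin.cast_bijective f.hNlast.symm)
          (Fin.cast_bijective f.hN0.symm)]
      exact kappa_precomp_le g _
  | D + 1, _, f => by
      have ih : (g.comp f.tail).kappa ≤ g.kappa * (√(frobSq (f.A (D + 1)) + 1)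
          * ∏ ℓ ∈ range D, f.layerFactor (ℓ + 1)) := kappa_comp_le f.tail
      rw [comp, kappa_cons, prod_range_succ',
        frobSq_submatrix (f.A 0) Function.bijective_id (Fin.cast_bijective f.hN0.symm)]
      calc f.layerFactor 0 * (g.comp f.tail).kappa
          ≤ f.layerFactor 0 * (g.kappa * (√(frobSq (f.A (D + 1)) + 1)
              * ∏ ℓ ∈ range D, f.layerFactor (ℓ + 1))) :=
            mul_le_mul_of_nonneg_left ih (f.layerFactor_nonneg 0)
        _ = _ := by ring

theorem widthLe_comp {W₁ W₂ : ℕ} (hg : g.widthLe W₂) :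
    ∀ {D₁ d : ℕ} (f : ReluNetwork D₁ d k), f.widthLe W₁ → (g.comp f).widthLe (max W₁ W₂)
  | 0, _, f, _ => by
      rw [comp]
      exact widthLe_precomp g _ (hg.mono (le_max_right _ _))
  | _ + 1, _, f, hf => by
      rw [comp]
      exact widthLe_cons _ _ _ ((hf 1 one_pos (by omega)).trans (le_max_left _ _))
        (widthLe_comp hg f.tail (widthLe_tail f hf))

end comp

-- Reducible, so that `(net.rescale c).N` unfolds to `net.N` when rewriting under `A` and `b`.
@[reducible]
def rescale (net : ReluNetwork D d k) (c : ℕ → ℝ) : ReluNetwork D d k where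
  N := net.N
  hN0 := net.hN0
  hNlast := net.hNlast
  A ℓ := if ℓ = D then (∏ j ∈ range D, c j)⁻¹ • net.A ℓ else c ℓ • net.A ℓ
  b ℓ := (∏ j ∈ range (ℓ + 1), c j) • net.b ℓ

section rescale

variable (net : ReluNetwork D d k) {c : ℕ → ℝ}

lemma rescale_A_of_ne {ℓ : ℕ} (h : ℓ ≠ D) : (net.rescale c).A ℓ = c ℓ • net.A ℓ := if_neg h

lemma rescale_A_last : (net.rescale c).A D = (∏ j ∈ range D, c j)⁻¹ • net.A D := if_pos rfl

lemma rescale_b (ℓ : ℕ) : (net.rescale c).b ℓ = (∏ j ∈ range (ℓ + 1), c j) • net.b ℓ := rfl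

lemma layer_rescale (hc : ∀ ℓ, 0 ≤ c ℓ) (x : Fin d → ℝ) {ℓ : ℕ} (hℓ : ℓ ≤ D) :
    (net.rescale c).layer ℓ x = (∏ j ∈ range ℓ, c j) • net.layer ℓ x := by
  induction ℓ with
  | zero => rw [prod_range_zero, one_smul]; rfl
  | succ ℓ ih =>
      rw [layer_succ, layer_succ, rescale_A_of_ne net (by omega), rescale_b, ih (by omega),
        reluLayer_smul_left, smul_smul, ← prod_range_succ_comm,
        reluLayer_smul (prod_nonneg fun j _ => hc j)]

lemma realize_rescale (hc : ∀ ℓ, 0 < c ℓ) : (net.rescale c).realize = net.realize := by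
  funext x
  rw [realize_apply, realize_apply, rescale_A_last,
    layer_rescale net (fun ℓ => (hc ℓ).le) x le_rfl, smul_mulVec, mulVec_smul, smul_smul,
    inv_mul_cancel₀ (prod_ne_zero_iff.2 fun j _ => (hc j).ne'), one_smul]

end rescale

def normalize (net : ReluNetwork D d k) : ReluNetwork D d k :=
  net.rescale fun ℓ => (net.layerFactor ℓ)⁻¹

section normalize

variable (net : ReluNetwork D d k)

lemma realize_normalize : net.normalize.realize = net.realize :=
  net.realize_rescale fun ℓ => inv_pos.2 (zero_lt_one.trans_le (net.one_le_layerFactor ℓ))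

lemma frob_normalize_A_last : frob (net.normalize.A D) = net.kappa := by
  have hP : 0 ≤ ∏ ℓ ∈ range D, net.layerFactor ℓ :=
    prod_nonneg fun ℓ _ => net.layerFactor_nonneg ℓ
  rw [normalize, rescale_A_last, frob, frobSq_smul, prod_inv_distrib, inv_inv,
    Real.sqrt_mul (sq_nonneg _), Real.sqrt_sq hP, kappa_eq, mul_comm]
  rfl

lemma layerFactor_normalize_le {ℓ : ℕ} (hℓ : ℓ < D) : net.normalize.layerFactor ℓ ≤ √2 := by
  set s := net.layerFactor ℓ
  set P := ∏ j ∈ range ℓ, (net.layerFactor j)⁻¹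
  have hs : s⁻¹ * s = 1 := inv_mul_cancel₀ (zero_lt_one.trans_le (net.one_le_layerFactor ℓ)).ne'
  have hs₀ : 0 ≤ s⁻¹ := inv_nonneg.2 (net.layerFactor_nonneg ℓ)
  have hsq : s ^ 2 = frobSq (net.A ℓ) + sqNorm (net.b ℓ) + 1 :=
    Real.sq_sqrt (by linarith [frobSq_nonneg (net.A ℓ), sqNorm_nonneg (net.b ℓ)])
  have hP₀ : 0 ≤ P := prod_nonneg fun j _ => inv_nonneg.2 (net.layerFactor_nonneg j)
  have hP₁ : P ≤ 1 := prod_le_one (fun j _ => inv_nonneg.2 (net.layerFactor_nonneg j))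
    fun j _ => inv_le_one_of_one_le₀ (net.one_le_layerFactor j)
  rw [layerFactor, normalize, rescale_A_of_ne net hℓ.ne, rescale_b, prod_range_succ, frobSq_smul,
    sqNorm_smul]
  apply Real.sqrt_le_sqrt
  calc s⁻¹ ^ 2 * frobSq (net.A ℓ) + (P * s⁻¹) ^ 2 * sqNorm (net.b ℓ) + 1
      ≤ s⁻¹ ^ 2 * frobSq (net.A ℓ) + s⁻¹ ^ 2 * sqNorm (net.b ℓ) + 1 := by
        gcongr
        · exact sqNorm_nonneg _
        · exact mul_le_of_le_one_left hs₀ hP₁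
    _ = 2 - s⁻¹ ^ 2 := by
        rw [← mul_add, show frobSq (net.A ℓ) + sqNorm (net.b ℓ) = s ^ 2 - 1 by linarith,
          mul_sub, ← mul_pow, hs]
        ring
    _ ≤ 2 := by linarith [sq_nonneg s⁻¹]

end normalize

end ReluNetwork

/-- **Composition.** If `φ₁ ∈ NN(W₁, D₁, K₁)` has output dimension equal to the
input dimension of `φ₂ ∈ NN(W₂, D₂, K₂)`, then
`φ₂ ∘ φ₁ ∈ NN(max W₁ W₂, D₁ + D₂, (√2)^{D₁} K₂ √(K₁² + 2))`. -/
theorem composition_NN (d k m W₁ W₂ D₁ D₂ : ℕ) (K₁ K₂ : ℝ)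
    (φ₁ : (Fin d → ℝ) → Fin k → ℝ) (φ₂ : (Fin k → ℝ) → Fin m → ℝ)
    (h₁ : φ₁ ∈ NNclass d k W₁ D₁ K₁) (h₂ : φ₂ ∈ NNclass k m W₂ D₂ K₂) :
    (fun x => φ₂ (φ₁ x)) ∈
      NNclass d m (max W₁ W₂) (D₁ + D₂)
        (Real.sqrt 2 ^ D₁ * K₂ * Real.sqrt (K₁ ^ 2 + 2)) := by
  obtain ⟨f, hf_width, hf_kappa, rfl⟩ := h₁
  obtain ⟨g, hg_width, hg_kappa, rfl⟩ := h₂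
  have hK₂ : 0 ≤ K₂ := g.kappa_nonneg.trans hg_kappa
  have h_top : frobSq (f.normalize.A D₁) ≤ K₁ ^ 2 := by
    rw [← frob_sq, f.frob_normalize_A_last]
    exact pow_le_pow_left₀ f.kappa_nonneg hf_kappa 2
  have h_hidden : ∏ ℓ ∈ range D₁, f.normalize.layerFactor ℓ ≤ √2 ^ D₁ := by
    calc ∏ ℓ ∈ range D₁, f.normalize.layerFactor ℓ ≤ ∏ ℓ ∈ range D₁, √2 :=
          prod_le_prod (fun ℓ _ => f.normalize.layerFactor_nonneg ℓ)
            fun ℓ hℓ => f.layerFactor_normalize_le (mem_range.1 hℓ)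
      _ = √2 ^ D₁ := by rw [prod_const, card_range]
  rw [Nat.add_comm D₁ D₂, ← f.realize_normalize]
  refine ⟨g.comp f.normalize, g.widthLe_comp hg_width f.normalize hf_width, ?_, g.realize_comp _⟩
  calc (g.comp f.normalize).kappa
      ≤ g.kappa * (√(frobSq (f.normalize.A D₁) + 1) * ∏ ℓ ∈ range D₁, f.normalize.layerFactor ℓ) :=
        g.kappa_comp_le f.normalize
    _ ≤ K₂ * (√(K₁ ^ 2 + 2) * √2 ^ D₁) := by
        have hP : 0 ≤ ∏ ℓ ∈ range D₁, f.normalize.layerFactor ℓ :=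
          prod_nonneg fun ℓ _ => f.normalize.layerFactor_nonneg ℓ
        gcongr
        norm_num
    _ = √2 ^ D₁ * K₂ * √(K₁ ^ 2 + 2) := by ring
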